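/- Let L be a separably closed field of characteristic p containing the finite field of q elements. Then the map GL(n,L) → GL(n,L), A ↦ τ(A)·A⁻¹, is surjective, where τ(A) denotes the matrix obtained from A by raising every entry to the q-th power. That is, for every B ∈ GL(n,L) there exists A ∈ GL(n,L) with B = τ(A)·A⁻¹. -/

import Mathlib

/-!
Solutions `A` of `τ(A) = B A` are exactly the invertible matrices whose columns solve
`τ(v) = B v`, so it suffices to find one nonzero such `v` and induct. The map
`φ u = B⁻¹ τ(u)` is an injective `q`-semilinear map; the `φ`-orbit of a nonzero vector becomes
linearly dependent after finitely many steps, and the search for a fixed vector in the span of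
the orbit collapses to one separable equation `P(s) ^ q = s` for a `q`-polynomial `P`, which
has a nonzero root because `L` is separably closed. Conjugating `B` into `τ(P)⁻¹ B P`, where
`P` has `v` as a column, puts `B` in block triangular form with a `1` in the corner; induction
solves the lower block, and the remaining row is solved entrywise by Artin–Schreier equations
`x ^ q = x + c`.
-/

open Polynomial Matrix

theorem Polynomial.separable_of_derivative_eq_neg_one {R : Type*} [CommRing R] {f : R[X]}
    (h : derivative f = -1) : f.Separable := by
  rw [separable_def, h]
  exact isCoprime_one_right.neg_right

theorem Polynomial.Separable.exists_ne_zero_isRoot {K : Type*} [Field K] [IsSepClosed K]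
    {f : K[X]} (hf : f.Separable) (hdeg : 2 ≤ f.natDegree) : ∃ x, x ≠ 0 ∧ f.IsRoot x := by
  by_contra! h
  have hroots : f.roots ≤ {0} := (Multiset.le_iff_subset (nodup_roots hf)).2 fun x hx =>
    Multiset.mem_singleton.2 (by_contra fun hx0 => h x hx0 (isRoot_of_mem_roots hx))
  have hcard := Multiset.card_le_card hroots
  rw [← (IsSepClosed.splits_of_separable f hf).natDegree_eq_card_roots,
    Multiset.card_singleton] at hcard
  omega

theorem Polynomial.two_le_natDegree_pow_add {K : Type*} [Field K] {q : ℕ} (hq : 2 ≤ q)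
    {P : K[X]} (hP : P ≠ 0) (hX : X ∣ P) {R : K[X]} (hR : R.natDegree ≤ 1) :
    2 ≤ (P ^ q + R).natDegree := by
  have h1 : 1 ≤ P.natDegree := natDegree_X (R := K) ▸ natDegree_le_of_dvd hX hP
  have h2 : 2 ≤ (P ^ q).natDegree := by rw [natDegree_pow]; nlinarith
  rwa [natDegree_add_eq_left_of_natDegree_lt (by omega)]

section LinearizedPoly

variable {K : Type*} [CommRing K] (q : ℕ) (a : ℕ → K)

/-- Evaluated at `s`, this is `∑ j ≤ i, (a j * s) ^ q ^ (i - j)` when `x ↦ x ^ q` is additive. -/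
noncomputable def linearizedPoly : ℕ → K[X]
  | 0 => C (a 0) * X
  | i + 1 => linearizedPoly i ^ q + C (a (i + 1)) * X

theorem linearizedPoly_succ (i : ℕ) :
    linearizedPoly q a (i + 1) = linearizedPoly q a i ^ q + C (a (i + 1)) * X := rfl

variable {q}

theorem X_dvd_linearizedPoly (hq : q ≠ 0) (i : ℕ) : X ∣ linearizedPoly q a i := by
  induction i with
  | zero => exact dvd_mul_left _ _
  | succ i ih => exact dvd_add (dvd_pow ih hq) (dvd_mul_left _ _)

theorem derivative_linearizedPoly (hq : (q : K) = 0) (i : ℕ) :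
    derivative (linearizedPoly q a i) = C (a i) := by
  cases i with
  | zero => simp [linearizedPoly]
  | succ i => simp [linearizedPoly_succ, derivative_pow, hq]

end LinearizedPoly

section SeparablyClosed

variable {K : Type*} [Field K]

theorem linearizedPoly_ne_zero {q : ℕ} {a : ℕ → K} (hq : 2 ≤ q) (hqK : (q : K) = 0)
    {i j : ℕ} (hj : j ≤ i) (ha : a j ≠ 0) : linearizedPoly q a i ≠ 0 := by
  induction i, hj using Nat.le_induction with
  | base =>
    intro h
    have h' := derivative_linearizedPoly a hqK j
    rw [h, derivative_zero, eq_comm, C_eq_zero] at h'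
    exact ha h'
  | succ i _ ih =>
    exact ne_zero_of_natDegree_gt (two_le_natDegree_pow_add hq ih
      (X_dvd_linearizedPoly a (by omega) i) ((natDegree_C_mul_le _ _).trans natDegree_X_le))

variable {p : ℕ} [Fact p.Prime] [CharP K p] [IsSepClosed K] {n : ℕ}

theorem exists_frobenius_eq_add (hn : n ≠ 0) (c : K) :
    ∃ x, iterateFrobenius K p n x = x + c := by
  have hq : 2 ≤ p ^ n := Nat.one_lt_pow hn (Fact.out : p.Prime).one_lt
  have hqK : ((p ^ n : ℕ) : K) = 0 := by simp [hn]
  have hsep : (X ^ p ^ n + -(X + C c)).Separable :=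
    separable_of_derivative_eq_neg_one (by simp [derivative_X_pow, hqK])
  obtain ⟨x, -, hx⟩ := hsep.exists_ne_zero_isRoot
    (two_le_natDegree_pow_add hq X_ne_zero dvd_rfl (by rw [natDegree_neg, natDegree_X_add_C]))
  refine ⟨x, ?_⟩
  simp only [IsRoot, eval_add, eval_pow, eval_X, eval_neg, eval_C] at hx
  rw [iterateFrobenius_def]
  linear_combination hx

theorem exists_ne_zero_eval_linearizedPoly_pow_eq {a : ℕ → K} (hn : n ≠ 0) {i j : ℕ}
    (hj : j ≤ i) (ha : a j ≠ 0) :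
    ∃ s ≠ (0 : K), (linearizedPoly (p ^ n) a i).eval s ^ p ^ n = s := by
  have hq : 2 ≤ p ^ n := Nat.one_lt_pow hn (Fact.out : p.Prime).one_lt
  have hqK : ((p ^ n : ℕ) : K) = 0 := by simp [hn]
  set P := linearizedPoly (p ^ n) a i
  have hsep : (P ^ p ^ n - X).Separable :=
    separable_of_derivative_eq_neg_one (by simp [derivative_pow, hqK])
  have hdeg : 2 ≤ (P ^ p ^ n - X).natDegree := by
    rw [sub_eq_add_neg]
    exact two_le_natDegree_pow_add hq (linearizedPoly_ne_zero hq hqK hj ha)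
      (X_dvd_linearizedPoly a (by omega) i) (by simp)
  obtain ⟨s, hs0, hs⟩ := hsep.exists_ne_zero_isRoot hdeg
  exact ⟨s, hs0, by simpa [sub_eq_zero] using hs⟩

end SeparablyClosed

section SemilinearOrbit

variable {K V : Type*} [Field K] [AddCommGroup V] [Module K V]

theorem LinearMap.map_sum_smul_of_coeff_recursion {σ : K →+* K} (φ : V →ₛₗ[σ] V) {w : ℕ → V}
    (hw : ∀ i, φ (w i) = w (i + 1)) {a c : ℕ → K} (hc₀ : c 0 = a 0)
    (hc : ∀ i, c (i + 1) = σ (c i) + a (i + 1)) (N : ℕ) :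
    φ (∑ i ∈ Finset.range (N + 1), c i • w i) + ∑ i ∈ Finset.range (N + 1), a i • w i =
      ∑ i ∈ Finset.range (N + 1), c i • w i + σ (c N) • w (N + 1) := by
  induction N with
  | zero => simp [hw, hc₀, add_comm]
  | succ N ih =>
    rw [Finset.sum_range_succ _ (N + 1), Finset.sum_range_succ _ (N + 1), map_add,
      add_add_add_comm, ih, map_smulₛₗ, hw, hc, add_smul]
    abel

theorem exists_mem_span_image_Iio [FiniteDimensional K V] (w : ℕ → V) :
    ∃ r, w r ∈ Submodule.span K (w '' Set.Iio r) := by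
  let U : ℕ →o Submodule K V :=
    ⟨fun r => Submodule.span K (w '' Set.Iio r), fun r s hrs =>
      Submodule.span_mono (Set.image_mono (Set.Iio_subset_Iio hrs))⟩
  obtain ⟨r, hr⟩ := WellFoundedGT.monotone_chain_condition U
  refine ⟨r, ?_⟩
  change w r ∈ U r
  rw [hr (r + 1) r.le_succ]
  exact Submodule.subset_span ⟨r, Set.mem_Iio.2 r.lt_succ_self, rfl⟩

variable {p : ℕ} [Fact p.Prime] [CharP K p] [IsSepClosed K] {n : ℕ}

theorem exists_ne_zero_fixed_of_orbit_relation (hn : n ≠ 0)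
    (φ : V →ₛₗ[iterateFrobenius K p n] V) {w : ℕ → V} (hw : ∀ i, φ (w i) = w (i + 1))
    {N : ℕ} (hN : w N ∉ Submodule.span K (w '' Set.Iio N)) {l : ℕ → K}
    (hrel : w (N + 1) = ∑ i ∈ Finset.range (N + 1), l i • w i) {j : ℕ} (hj : j ≤ N)
    (hl : l j ≠ 0) : ∃ v ≠ 0, φ v = v := by
  obtain ⟨s, hs0, hs⟩ := exists_ne_zero_eval_linearizedPoly_pow_eq hn hj hl
  -- `v = ∑ c i • w i`; the recursion for `c` makes `φ v - v` a multiple of `c N ^ q - s`.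
  set c := fun i => (linearizedPoly (p ^ n) l i).eval s
  have htel := φ.map_sum_smul_of_coeff_recursion hw (a := fun i => l i * s) (c := c)
    (by simp [c, linearizedPoly])
    (fun i => by simp [c, linearizedPoly_succ, iterateFrobenius_def]) N
  have hsum : ∑ i ∈ Finset.range (N + 1), (l i * s) • w i = s • w (N + 1) := by
    simp_rw [hrel, Finset.smul_sum, mul_comm, smul_smul]
  rw [hsum, iterateFrobenius_def, hs, add_left_inj] at htel
  refine ⟨_, fun hv => hN ?_, htel⟩
  have hcN : c N ≠ 0 := ne_zero_pow (pow_ne_zero n (Fact.out : p.Prime).ne_zero) (hs.symm ▸ hs0)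
  rw [Finset.sum_range_succ, add_eq_zero_iff_neg_eq'] at hv
  rw [← Submodule.smul_mem_iff _ hcN, ← neg_mem_iff, hv]
  exact Submodule.sum_mem _ fun i hi => Submodule.smul_mem _ _
    (Submodule.subset_span ⟨i, Finset.mem_range.1 hi, rfl⟩)

theorem exists_ne_zero_fixed_of_injective [FiniteDimensional K V] [Nontrivial V] (hn : n ≠ 0)
    (φ : V →ₛₗ[iterateFrobenius K p n] V) (hφ : Function.Injective φ) :
    ∃ v ≠ 0, φ v = v := by
  classical
  obtain ⟨w₀, hw₀⟩ := exists_ne (0 : V)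
  set w := fun i => φ^[i] w₀
  have hw : ∀ i, φ (w i) = w (i + 1) := fun i => (Function.iterate_succ_apply' φ i w₀).symm
  have hw_ne : ∀ i, w i ≠ 0 := fun i h =>
    hw₀ ((hφ.iterate i).eq_iff' (Function.iterate_fixed (map_zero φ) i) |>.1 h)
  have hex := exists_mem_span_image_Iio (K := K) w
  obtain ⟨N, hN⟩ : ∃ N, Nat.find hex = N + 1 := Nat.exists_eq_succ_of_ne_zero fun h0 =>
    hw_ne 0 (by simpa [h0] using Nat.find_spec hex)
  have hmin : w N ∉ Submodule.span K (w '' Set.Iio N) := Nat.find_min hex (by omega)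
  obtain ⟨l, hl, hrel⟩ :=
    (Finsupp.mem_span_image_iff_linearCombination K).1 (hN ▸ Nat.find_spec hex)
  rw [Finsupp.linearCombination_apply, Finsupp.sum_of_support_subset l
    (s := Finset.range (N + 1)) (fun i hi => by simpa using hl hi) (fun i a => a • w i)
    (fun _ _ => zero_smul K _)] at hrel
  obtain ⟨j, hj, hlj⟩ : ∃ j ≤ N, l j ≠ 0 := by
    by_contra! h
    exact hw_ne (N + 1) (hrel ▸ Finset.sum_eq_zero fun i hi => by
      rw [h i (Nat.lt_succ_iff.1 (Finset.mem_range.1 hi)), zero_smul])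
  exact exists_ne_zero_fixed_of_orbit_relation hn φ hw hmin hrel.symm hj hlj

end SemilinearOrbit

section TwistedEquation

variable {L : Type*} [Field L] (σ : L →+* L) {ι : Type*} [Fintype ι] [DecidableEq ι]

theorem Matrix.isUnit_det_map {P : Matrix ι ι L} (hP : IsUnit P.det) :
    IsUnit (P.map σ).det := by
  rw [← RingHom.mapMatrix_apply, ← RingHom.map_det]
  exact hP.map σ

theorem exists_map_eq_mul_of_twist {B P : Matrix ι ι L} (hP : IsUnit P.det)
    (h : ∃ A : Matrix ι ι L, IsUnit A.det ∧ A.map σ = (P.map σ)⁻¹ * B * P * A) :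
    ∃ A : Matrix ι ι L, IsUnit A.det ∧ A.map σ = B * A := by
  obtain ⟨A, hA, hAσ⟩ := h
  refine ⟨P * A, by rw [det_mul]; exact hP.mul hA, ?_⟩
  rw [Matrix.map_mul, hAσ, Matrix.mul_assoc, Matrix.mul_assoc,
    mul_nonsing_inv_cancel_left _ _ (isUnit_det_map σ hP)]

theorem exists_map_eq_mul_of_submatrix {κ : Type*} [Fintype κ] [DecidableEq κ] (e : κ ≃ ι)
    {B : Matrix ι ι L}
    (h : ∃ A : Matrix κ κ L, IsUnit A.det ∧ A.map σ = B.submatrix e e * A) :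
    ∃ A : Matrix ι ι L, IsUnit A.det ∧ A.map σ = B * A := by
  obtain ⟨A, hA, hAσ⟩ := h
  refine ⟨A.submatrix e.symm e.symm, by rwa [det_submatrix_equiv_self], ?_⟩
  rw [← submatrix_map, hAσ, ← submatrix_mul_equiv _ _ _ e.symm, submatrix_submatrix,
    Equiv.self_comp_symm, submatrix_id_id]

theorem exists_map_eq_mul_of_toBlocks (hσ : ∀ c, ∃ x, σ x = x + c)
    {κ₁ κ₂ : Type*} [Fintype κ₁] [DecidableEq κ₁] [Fintype κ₂] [DecidableEq κ₂]
    {M : Matrix (κ₁ ⊕ κ₂) (κ₁ ⊕ κ₂) L} (h₁₁ : M.toBlocks₁₁ = 1) (h₂₁ : M.toBlocks₂₁ = 0)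
    (h : ∃ A : Matrix κ₂ κ₂ L, IsUnit A.det ∧ A.map σ = M.toBlocks₂₂ * A) :
    ∃ A : Matrix (κ₁ ⊕ κ₂) (κ₁ ⊕ κ₂) L, IsUnit A.det ∧ A.map σ = M * A := by
  obtain ⟨A₂, hA₂, hA₂σ⟩ := h
  choose X hX using fun a b => hσ ((M.toBlocks₁₂ * A₂) a b)
  refine ⟨fromBlocks 1 (of X) 0 A₂, by simpa [det_fromBlocks_zero₂₁] using hA₂, ?_⟩
  rw [← M.fromBlocks_toBlocks, h₁₁, h₂₁, fromBlocks_multiply, fromBlocks_map,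
    Matrix.map_one _ σ.map_zero σ.map_one, Matrix.map_zero _ σ.map_zero, hA₂σ]
  congr 1
  · simp
  · ext a b; simp [hX]
  · simp
  · simp

theorem twist_mulVec_single_of_mulVec_single {B P : Matrix ι ι L} {v : ι → L} {k : ι}
    (hP : IsUnit P.det) (hPv : P *ᵥ Pi.single k 1 = v) (hv : σ ∘ v = B *ᵥ v) :
    ((P.map σ)⁻¹ * B * P) *ᵥ Pi.single k 1 = Pi.single k 1 := by
  have hPσv : P.map σ *ᵥ Pi.single k 1 = σ ∘ v := by
    rw [← hPv, mulVec_single_one, mulVec_single_one]; rfl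
  rw [← mulVec_mulVec, hPv, ← mulVec_mulVec, ← hv, ← hPσv, mulVec_mulVec,
    nonsing_inv_mul _ (isUnit_det_map σ hP), one_mulVec]

variable {k : ι} {M : Matrix ι ι L}

theorem toBlocks₁₁_submatrix_sumCompl (hM : M *ᵥ Pi.single k 1 = Pi.single k 1) :
    (M.submatrix (Equiv.sumCompl (· = k)) (Equiv.sumCompl (· = k))).toBlocks₁₁ = 1 := by
  ext ⟨a, rfl⟩ ⟨b, rfl⟩
  simpa [toBlocks₁₁, mulVec_single_one] using congrFun hM b

theorem toBlocks₂₁_submatrix_sumCompl (hM : M *ᵥ Pi.single k 1 = Pi.single k 1) :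
    (M.submatrix (Equiv.sumCompl (· = k)) (Equiv.sumCompl (· = k))).toBlocks₂₁ = 0 := by
  ext ⟨a, ha⟩ ⟨b, rfl⟩
  simpa [toBlocks₂₁, mulVec_single_one, ha] using congrFun hM a

theorem det_submatrix_compl_of_mulVec_single (hM : M *ᵥ Pi.single k 1 = Pi.single k 1) :
    (M.submatrix ((↑) : {i // ¬i = k} → ι) (↑)).det = M.det := by
  rw [← det_submatrix_equiv_self (Equiv.sumCompl (· = k)) M,
    ← fromBlocks_toBlocks (M.submatrix _ _), toBlocks₁₁_submatrix_sumCompl hM,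
    toBlocks₂₁_submatrix_sumCompl hM, det_fromBlocks_zero₂₁, det_one, one_mul]
  rfl

theorem exists_map_eq_mul_of_mulVec_single (hσ : ∀ c, ∃ x, σ x = x + c)
    (hM : M *ᵥ Pi.single k 1 = Pi.single k 1)
    (h : ∃ A : Matrix {i // ¬i = k} {i // ¬i = k} L, IsUnit A.det ∧
      A.map σ = M.submatrix (↑) (↑) * A) :
    ∃ A : Matrix ι ι L, IsUnit A.det ∧ A.map σ = M * A :=
  exists_map_eq_mul_of_submatrix σ (Equiv.sumCompl (· = k)) <|
    exists_map_eq_mul_of_toBlocks σ hσ (toBlocks₁₁_submatrix_sumCompl hM)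
      (toBlocks₂₁_submatrix_sumCompl hM) h

end TwistedEquation

section Lang

variable {L : Type*} [Field L] {p : ℕ} [Fact p.Prime] [CharP L p] [IsSepClosed L] {n : ℕ}
  {ι : Type*} [Fintype ι] [DecidableEq ι]

theorem exists_ne_zero_frobenius_comp_eq_mulVec [Nonempty ι] (hn : n ≠ 0) {B : Matrix ι ι L}
    (hB : IsUnit B.det) : ∃ v ≠ 0, iterateFrobenius L p n ∘ v = B *ᵥ v := by
  let φ : (ι → L) →ₛₗ[iterateFrobenius L p n] (ι → L) :=
    { toFun := fun u => B⁻¹ *ᵥ (iterateFrobenius L p n ∘ u)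
      map_add' := fun u u' => by rw [← mulVec_add]; congr 1; ext; simp
      map_smul' := fun c u => by rw [← mulVec_smul]; congr 1; ext; simp }
  have hB' : Function.Injective (B⁻¹ *ᵥ ·) :=
    mulVec_injective_iff_isUnit.2 ((isUnit_iff_isUnit_det _).2 (isUnit_nonsing_inv_det _ hB))
  obtain ⟨v, hv0, hv⟩ := exists_ne_zero_fixed_of_injective hn φ
    (fun u u' h => (iterateFrobenius_inj L p n).comp_left (hB' h))
  refine ⟨v, hv0, ?_⟩
  nth_rewrite 2 [← hv]
  change _ = B *ᵥ (B⁻¹ *ᵥ _)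
  rw [mulVec_mulVec, mul_nonsing_inv _ hB, one_mulVec]

theorem exists_isUnit_det_map_frobenius_eq_mul (hn : n ≠ 0) (B : Matrix ι ι L)
    (hB : IsUnit B.det) :
    ∃ A : Matrix ι ι L, IsUnit A.det ∧ A.map (iterateFrobenius L p n) = B * A := by
  induction h : Fintype.card ι generalizing ι with
  | zero =>
    have := Fintype.card_eq_zero_iff.1 h
    exact ⟨1, by simp, Subsingleton.elim _ _⟩
  | succ m ih =>
    have : Nonempty ι := Fintype.card_pos_iff.1 (by omega)
    obtain ⟨v, hv0, hv⟩ := exists_ne_zero_frobenius_comp_eq_mulVec hn hB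
    obtain ⟨k, hk⟩ := Function.ne_iff.1 hv0
    set P := (1 : Matrix ι ι L).updateCol k v
    have hP : IsUnit P.det := by
      rw [← cramer_apply, cramer_one]
      exact hk.isUnit
    have hPv : P *ᵥ Pi.single k 1 = v := by rw [mulVec_single_one]; ext i; simp [P]
    have hM := twist_mulVec_single_of_mulVec_single _ hP hPv hv
    refine exists_map_eq_mul_of_twist _ hP <| exists_map_eq_mul_of_mulVec_single _
      (exists_frobenius_eq_add hn) hM (ih _ ?_ ?_)
    · rw [det_submatrix_compl_of_mulVec_single hM, det_mul, det_mul]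
      exact ((isUnit_nonsing_inv_det _ (isUnit_det_map _ hP)).mul hB).mul hP
    · simp [Fintype.card_subtype_compl, h]

end Lang

theorem stmt_13
    (p n : ℕ) [Fact p.Prime] (hn : 0 < n)
    (L : Type) [Field L] [IsSepClosed L] [CharP L p]
    (m : ℕ) (B : Matrix (Fin m) (Fin m) L) (hB : IsUnit B.det) :
    ∃ A : Matrix (Fin m) (Fin m) L, IsUnit A.det ∧
      B = A.map (fun x => x ^ p ^ n) * A⁻¹ := by
  obtain ⟨A, hA, hAσ⟩ := exists_isUnit_det_map_frobenius_eq_mul (p := p) hn.ne' B hB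
  refine ⟨A, hA, ?_⟩
  rw [show A.map (fun x => x ^ p ^ n) = B * A from hAσ, mul_nonsing_inv_cancel_right _ _ hA]
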